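/- Let $U_1, U_2$ have the bivariate generalised beta type I density $f(u_1,u_2) = \frac{\Gamma(a+b+c)}{\Gamma(a)\Gamma(b)\Gamma(c)} \cdot \frac{u_1^{a-1}u_2^{b-1}(1-u_1)^{b+c-1}(1-u_2)^{a+c-1}}{(1-u_1u_2)^{a+b+c}}$ on $(0,1)^2$ with $a,b,c>0$. Then the marginal density of $U_1$ is the Beta$(a, c)$ density $\frac{\Gamma(a+c)}{\Gamma(a)\Gamma(c)} u_1^{a-1}(1-u_1)^{c-1}$ on $(0,1)$. -/

import Mathlib

open MeasureTheory Real

/-!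
Fix `u₁ = x ∈ (0,1)`. The substitution `s = t (1 - x) / (1 - x t)` maps `(0,1)` increasingly onto
itself, with `ds = (1 - x) / (1 - x t)² dt` and `1 - s = (1 - t) / (1 - x t)`; it turns
`∫₀¹ t^(β-1) (1-t)^(γ-1) (1 - x t)^(-(β+γ)) dt` into `(1 - x)^(-β) B(β, γ)`.
With `β = b`, `γ = a + c` the factor `(1 - x)^(-b)` lowers `(1 - x)^(b+c-1)` to `(1 - x)^(c-1)`,
and `B(b, a + c) = Γ(b) Γ(a + c) / Γ(a + b + c)` cancels the constant down to
`Γ(a + c) / (Γ(a) Γ(c))`.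
-/

section BetaSubstitution

open Set

theorem integral_Ioo_rpow_mul_one_sub_rpow {p q : ℝ} (hp : 0 < p) (hq : 0 < q) :
    ∫ x in Ioo (0:ℝ) 1, x ^ (p - 1) * (1 - x) ^ (q - 1) = ProbabilityTheory.beta p q := by
  have hofReal : ∀ x ∈ Ioc (0:ℝ) 1, (x:ℂ) ^ ((p:ℂ) - 1) * (1 - (x:ℂ)) ^ ((q:ℂ) - 1)
      = ((x ^ (p - 1) * (1 - x) ^ (q - 1) : ℝ) : ℂ) := fun x hx => by
    rw [Complex.ofReal_mul, Complex.ofReal_cpow hx.1.le,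
      Complex.ofReal_cpow (sub_nonneg.mpr hx.2)]
    push_cast
    ring
  have hbeta : Complex.betaIntegral p q
      = ((∫ x in Ioo (0:ℝ) 1, x ^ (p - 1) * (1 - x) ^ (q - 1) : ℝ) : ℂ) := by
    rw [Complex.betaIntegral, intervalIntegral.integral_of_le zero_le_one,
      setIntegral_congr_fun measurableSet_Ioc hofReal, integral_complex_ofReal,
      integral_Ioc_eq_integral_Ioo]
  rw [ProbabilityTheory.beta_eq_betaIntegralReal p q hp hq, hbeta, Complex.ofReal_re]

variable {x t : ℝ}

noncomputable def betaSubst (x t : ℝ) : ℝ := t * (1 - x) / (1 - x * t)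

lemma one_sub_mul_pos_of_lt_one (hx : x < 1) (ht : t ∈ Icc (0:ℝ) 1) : 0 < 1 - x * t := by
  obtain ⟨ht₀, ht₁⟩ := ht
  rcases le_or_gt 0 x with h | h <;> nlinarith

lemma one_sub_betaSubst (ht : 1 - x * t ≠ 0) :
    1 - betaSubst x t = (1 - t) / (1 - x * t) := by
  rw [betaSubst, eq_div_iff ht, sub_mul, div_mul_cancel₀ _ ht]
  ring

lemma hasDerivAt_betaSubst (ht : 1 - x * t ≠ 0) :
    HasDerivAt (betaSubst x) ((1 - x) / (1 - x * t) ^ 2) t := by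
  have hnum : HasDerivAt (fun t => t * (1 - x)) (1 - x) t := by
    simpa using (hasDerivAt_id t).mul_const (1 - x)
  have hden : HasDerivAt (fun t => 1 - x * t) (-x) t := by
    simpa using ((hasDerivAt_id t).const_mul x).const_sub 1
  have h := hnum.div hden ht
  rwa [show (1 - x) * (1 - x * t) - t * (1 - x) * -x = 1 - x by ring] at h

lemma monotoneOn_betaSubst (hx : x < 1) : MonotoneOn (betaSubst x) (Icc 0 1) := by
  intro s hs t ht hst
  have hs' := one_sub_mul_pos_of_lt_one hx hs
  have ht' := one_sub_mul_pos_of_lt_one hx ht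
  rw [betaSubst, betaSubst, div_le_div_iff₀ hs' ht']
  nlinarith

lemma betaSubst_image_Ioo (hx : x < 1) : betaSubst x '' Ioo 0 1 = Ioo 0 1 := by
  have hx' : 0 < 1 - x := sub_pos.mpr hx
  ext s
  constructor
  · rintro ⟨t, ht, rfl⟩
    have hd := one_sub_mul_pos_of_lt_one hx (Ioo_subset_Icc_self ht)
    obtain ⟨ht₀, ht₁⟩ := ht
    exact ⟨by unfold betaSubst; positivity, by rw [betaSubst, div_lt_one hd]; nlinarith⟩
  · rintro ⟨hs₀, hs₁⟩
    have hd : 0 < 1 - x + x * s := by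
      have := one_sub_mul_pos_of_lt_one hx (t := 1 - s) ⟨by linarith, by linarith⟩
      linarith
    -- the inverse substitution
    refine ⟨s / (1 - x + x * s), ⟨by positivity, by rw [div_lt_one hd]; nlinarith⟩, ?_⟩
    have hd' : 1 - x * (s / (1 - x + x * s)) = (1 - x) / (1 - x + x * s) := by
      field_simp
      ring
    rw [betaSubst, hd']
    field_simp
    exact div_self (by linarith)

lemma integral_Ioo_eq_integral_betaSubst {E : Type*} [NormedAddCommGroup E] [NormedSpace ℝ E]
    (hx : x < 1) (g : ℝ → E) :
    ∫ s in Ioo 0 1, g s = ∫ t in Ioo 0 1, ((1 - x) / (1 - x * t) ^ 2) • g (betaSubst x t) := by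
  have hderiv : ∀ t ∈ Ioo (0:ℝ) 1,
      HasDerivWithinAt (betaSubst x) ((1 - x) / (1 - x * t) ^ 2) (Ioo 0 1) t := fun t ht =>
    (hasDerivAt_betaSubst
      (one_sub_mul_pos_of_lt_one hx (Ioo_subset_Icc_self ht)).ne').hasDerivWithinAt
  simpa only [betaSubst_image_Ioo hx] using
    integral_image_eq_integral_deriv_smul_of_monotoneOn measurableSet_Ioo hderiv
      ((monotoneOn_betaSubst hx).mono Ioo_subset_Icc_self) g

lemma jacobian_mul_rpow_betaSubst_mul_rpow_one_sub (hx : x < 1) (ht : t ∈ Ioo (0:ℝ) 1)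
    (β γ : ℝ) :
    (1 - x) / (1 - x * t) ^ 2 * (betaSubst x t ^ (β - 1) * (1 - betaSubst x t) ^ (γ - 1))
      = (1 - x) ^ β * (t ^ (β - 1) * (1 - t) ^ (γ - 1) / (1 - x * t) ^ (β + γ)) := by
  have hx' : 0 < 1 - x := sub_pos.mpr hx
  have hd := one_sub_mul_pos_of_lt_one hx (Ioo_subset_Icc_self ht)
  obtain ⟨ht₀, ht₁⟩ := ht
  have hpow_x : (1 - x) ^ β = (1 - x) * (1 - x) ^ (β - 1) := by
    conv_lhs => rw [← add_sub_cancel 1 β, rpow_add hx', rpow_one]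
  have hpow_d : (1 - x * t) ^ (β + γ)
      = (1 - x * t) ^ 2 * (1 - x * t) ^ (β - 1) * (1 - x * t) ^ (γ - 1) := by
    rw [← rpow_natCast, ← rpow_add hd, ← rpow_add hd]
    ring_nf
  rw [one_sub_betaSubst hd.ne', betaSubst, div_rpow (by positivity) hd.le,
    mul_rpow ht₀.le hx'.le, div_rpow (by linarith) hd.le, hpow_x, hpow_d]
  have : 0 < (1 - x * t) ^ (β - 1) := by positivity
  have : 0 < (1 - x * t) ^ (γ - 1) := by positivity
  field_simp

lemma integral_rpow_mul_one_sub_rpow_div_one_sub_mul_rpow (hx : x < 1) (β γ : ℝ) :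
    ∫ t in Ioo (0:ℝ) 1, t ^ (β - 1) * (1 - t) ^ (γ - 1) / (1 - x * t) ^ (β + γ)
      = (1 - x) ^ (-β) * ∫ s in Ioo (0:ℝ) 1, s ^ (β - 1) * (1 - s) ^ (γ - 1) := by
  have hx' : 0 < 1 - x := sub_pos.mpr hx
  rw [integral_Ioo_eq_integral_betaSubst hx (fun s => s ^ (β - 1) * (1 - s) ^ (γ - 1)),
    ← integral_const_mul]
  refine setIntegral_congr_fun measurableSet_Ioo fun t ht => ?_
  rw [smul_eq_mul, jacobian_mul_rpow_betaSubst_mul_rpow_one_sub hx ht, rpow_neg hx'.le,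
    inv_mul_cancel_left₀ (by positivity)]

end BetaSubstitution

theorem bivariate_gen_beta_I_marginal (a b c : ℝ) (ha : 0 < a) (hb : 0 < b) (hc : 0 < c) :
    ∀ u₁ : ℝ, 0 < u₁ → u₁ < 1 →
      (∫ u₂ in Set.Ioo (0:ℝ) 1,
        Gamma (a + b + c) / (Gamma a * Gamma b * Gamma c) *
          (u₁ ^ (a - 1) * u₂ ^ (b - 1) * (1 - u₁) ^ (b + c - 1) * (1 - u₂) ^ (a + c - 1) /
            (1 - u₁ * u₂) ^ (a + b + c)))
      = Gamma (a + c) / (Gamma a * Gamma c) * (u₁ ^ (a - 1) * (1 - u₁) ^ (c - 1)) := by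
  intro u₁ _ hu₁
  have hac : 0 < a + c := add_pos ha hc
  have hpow : (1 - u₁) ^ (b + c - 1) * (1 - u₁) ^ (-b) = (1 - u₁) ^ (c - 1) := by
    rw [← rpow_add (sub_pos.mpr hu₁)]
    ring_nf
  have hΓb := (Gamma_pos_of_pos hb).ne'
  have hΓabc := (Gamma_pos_of_pos (by linarith : 0 < a + b + c)).ne'
  calc _ = Gamma (a + b + c) / (Gamma a * Gamma b * Gamma c) *
          (u₁ ^ (a - 1) * (1 - u₁) ^ (b + c - 1)) * ∫ u₂ in Set.Ioo (0:ℝ) 1,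
            u₂ ^ (b - 1) * (1 - u₂) ^ (a + c - 1) / (1 - u₁ * u₂) ^ (b + (a + c)) := by
        rw [← integral_const_mul, ← add_assoc, add_comm b a]
        congr 1
        ext u₂
        ring
    _ = _ := by
        rw [integral_rpow_mul_one_sub_rpow_div_one_sub_mul_rpow hu₁,
          integral_Ioo_rpow_mul_one_sub_rpow hb hac, ProbabilityTheory.beta,
          ← add_assoc, add_comm b a, ← hpow]
        field_simp
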